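/- Pseudo-population factorization for stabilized weights (equation (B.2.1)): Assume (A2) and (A3). Then for every ā, b̄ ∈ {0,1}^K and every Borel set B ⊆ ℝ: 𝔼[W_sw · 1{Y^{ā} ∈ B} · 1{Ā(K−1) = b̄}] = P(Y^{ā} ∈ B) · P(Ā(K−1) = b̄). That is, in the pseudo-population obtained by weighting by W_sw, the potential outcome Y^{ā} and the treatment history Ā(K−1) are independent, each retaining its original marginal distribution. -/

import Mathlib

open MeasureTheory Finset
open scoped Classical

namespace MSMPaper

noncomputable section

variable {Ω : Type*} [MeasurableSpace Ω] {𝓛 : Type*}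

/-- Conditional probability `P(E | F) = P(E ∩ F) / P(F)` as a real number
(junk value `0` when `P F = 0`). -/
def cP (P : Measure Ω) (E F : Set Ω) : ℝ := (P (E ∩ F)).toReal / (P F).toReal

variable {K : ℕ}

/-- Event `Ā(t−1) = b̄` (treatment history up to, not including, time `t`). -/
def Apast (A : Fin K → Ω → Bool) (t : ℕ) (b : Fin K → Bool) : Set Ω :=
  {ω | ∀ k : Fin K, (k : ℕ) < t → A k ω = b k}

/-- Event `L̄(t) = l̄` (covariate history up to and including time `t`). -/
def Lpast (L : Fin K → Ω → 𝓛) (t : ℕ) (l : Fin K → 𝓛) : Set Ω :=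
  {ω | ∀ k : Fin K, (k : ℕ) ≤ t → L k ω = l k}

/-- Event `A̲(s, t−1) = b` (treatment history from time `s` up to, not including, `t`). -/
def Aseg (A : Fin K → Ω → Bool) (s t : ℕ) (b : Fin K → Bool) : Set Ω :=
  {ω | ∀ k : Fin K, s ≤ (k : ℕ) → (k : ℕ) < t → A k ω = b k}

/-- Event `A̲(K−m) = a̲` for a (last-`m`) treatment vector `as`. -/
def EtrV (A : Fin K → Ω → Bool) (m : ℕ) (as : Fin K → Bool) : Set Ω :=
  {ω | ∀ k : Fin K, K - m ≤ (k : ℕ) → A k ω = as k}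

/-- Event `A̲(K−m) = a_m` (constant `a` on the last `m` coordinates). -/
def Etr (A : Fin K → Ω → Bool) (m : ℕ) (a : Bool) : Set Ω :=
  EtrV A m (fun _ => a)

/-- Stabilized weights `W_sw`. -/
def Wsw (P : Measure Ω) (A : Fin K → Ω → Bool) (L : Fin K → Ω → 𝓛) : Ω → ℝ :=
  fun ω => ∏ k : Fin K,
    cP P {ω' | A k ω' = A k ω} (Apast A (k : ℕ) (fun j => A j ω)) /
      cP P {ω' | A k ω' = A k ω}
        (Lpast L (k : ℕ) (fun j => L j ω) ∩ Apast A (k : ℕ) (fun j => A j ω))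

/-- Restricted stabilized weights `W_rsw^(m)`. -/
def Wrsw (P : Measure Ω) (A : Fin K → Ω → Bool) (L : Fin K → Ω → 𝓛) (m : ℕ) : Ω → ℝ :=
  fun ω => ∏ k ∈ Finset.univ.filter (fun k : Fin K => K - m ≤ (k : ℕ)),
    cP P {ω' | A k ω' = A k ω} (Aseg A (K - m) (k : ℕ) (fun j => A j ω)) /
      cP P {ω' | A k ω' = A k ω}
        (Lpast L (k : ℕ) (fun j => L j ω) ∩ Apast A (k : ℕ) (fun j => A j ω))

/-- Partial stabilized weights `W_psw^(m)`. -/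
def Wpsw (P : Measure Ω) (A : Fin K → Ω → Bool) (L : Fin K → Ω → 𝓛) (m : ℕ) : Ω → ℝ :=
  fun ω => ∏ k ∈ Finset.univ.filter (fun k : Fin K => K - m ≤ (k : ℕ)),
    cP P {ω' | A k ω' = A k ω} (Apast A (k : ℕ) (fun j => A j ω)) /
      cP P {ω' | A k ω' = A k ω}
        (Lpast L (k : ℕ) (fun j => L j ω) ∩ Apast A (k : ℕ) (fun j => A j ω))

/-- IP-weighted contrast `θ_W^(m)`. -/
def θW (P : Measure Ω) (A : Fin K → Ω → Bool) (m : ℕ) (W Y : Ω → ℝ) : ℝ :=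
  (∫ ω in Etr A m true, W ω * Y ω ∂P) / (∫ ω in Etr A m true, W ω ∂P) -
    (∫ ω in Etr A m false, W ω * Y ω ∂P) / (∫ ω in Etr A m false, W ω ∂P)

/-- `rev j` is the time index `K − 1 − j`; the paper's coefficient `ψ_{j+1}`
multiplies `a(K − (j+1)) = a(rev j)`. -/
def rev (j : Fin K) : Fin K := ⟨K - 1 - (j : ℕ), by have := j.isLt; omega⟩

/-- `θ^(K) = 𝔼[Y^{1_K}] − 𝔼[Y^{0_K}]`. -/
def θKfull (P : Measure Ω) (Ypot : (Fin K → Bool) → Ω → ℝ) : ℝ :=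
  (∫ ω, Ypot (fun _ => true) ω ∂P) - ∫ ω, Ypot (fun _ => false) ω ∂P

/-- (A1) consistency. -/
def A1ok (A : Fin K → Ω → Bool) (Y : Ω → ℝ) (Ypot : (Fin K → Bool) → Ω → ℝ) : Prop :=
  ∀ (a : Fin K → Bool) (ω : Ω), (∀ k, A k ω = a k) → Y ω = Ypot a ω

/-- (A2) sequential exchangeability. -/
def A2ok (P : Measure Ω) (A : Fin K → Ω → Bool) (L : Fin K → Ω → 𝓛)
    (Ypot : (Fin K → Bool) → Ω → ℝ) : Prop :=
  ∀ (t : Fin K) (a : Fin K → Bool) (B : Set ℝ), MeasurableSet B →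
    ∀ (av : Bool) (l : Fin K → 𝓛) (b : Fin K → Bool),
      0 < P (Lpast L (t : ℕ) l ∩ Apast A (t : ℕ) b) →
      cP P ({ω | Ypot a ω ∈ B} ∩ {ω | A t ω = av}) (Lpast L (t : ℕ) l ∩ Apast A (t : ℕ) b) =
        cP P {ω | Ypot a ω ∈ B} (Lpast L (t : ℕ) l ∩ Apast A (t : ℕ) b) *
          cP P {ω | A t ω = av} (Lpast L (t : ℕ) l ∩ Apast A (t : ℕ) b)

/-- (A3) positivity. -/
def A3ok (P : Measure Ω) (A : Fin K → Ω → Bool) (L : Fin K → Ω → 𝓛) : Prop :=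
  ∀ (t : Fin K) (av : Bool) (l : Fin K → 𝓛) (b : Fin K → Bool),
    0 < P (Lpast L (t : ℕ) l ∩ Apast A (t : ℕ) b) →
    0 < cP P {ω | A t ω = av} (Lpast L (t : ℕ) l ∩ Apast A (t : ℕ) b)

/-- The marginal structural model `𝔼[Y^{ā}] = ψ₀ + Σ_{j=1}^K ψ_j a(K−j)`;
here `ψ j` is the paper's `ψ_{j+1}`, the coefficient of `a(K−1−j)`. -/
def MSMeq (P : Measure Ω) (Ypot : (Fin K → Bool) → Ω → ℝ) (ψ0 : ℝ) (ψ : Fin K → ℝ) : Prop :=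
  ∀ a : Fin K → Bool,
    (∫ ω, Ypot a ω ∂P) = ψ0 + ∑ j : Fin K, ψ j * (if a (rev j) = true then 1 else 0)

/-- (A5) conditional MSM given the past treatment history `Ā(K−m−1)`. -/
def A5ok (P : Measure Ω) (A : Fin K → Ω → Bool) (Ypot : (Fin K → Bool) → Ω → ℝ)
    (m : ℕ) : Prop :=
  ∀ b : Fin K → Bool, 0 < P (Apast A (K - m) b) →
    ∃ (φ0 : ℝ) (φ : Fin K → ℝ), ∀ a : Fin K → Bool,
      (∫ ω in Apast A (K - m) b, Ypot a ω ∂P) / (P (Apast A (K - m) b)).toReal =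
        φ0 + ∑ j : Fin K, φ j * (if a (rev j) = true then 1 else 0)

/-- `q_{j+1} = P(A(K−1−j)=1 | A̲(K−m)=1_m) − P(A(K−1−j)=1 | A̲(K−m)=0_m)`. -/
def qcoef (P : Measure Ω) (A : Fin K → Ω → Bool) (m : ℕ) (j : Fin K) : ℝ :=
  cP P {ω | A (rev j) ω = true} (Etr A m true) -
    cP P {ω | A (rev j) ω = true} (Etr A m false)

end

/-!
Write `g_k(l̄, b̄)` for the propensity `P(A(k) = b(k) | L̄(k) = l̄, Ā(k−1) = b̄)` and `π_k(b̄)` for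
the marginal `P(A(k) = b(k) | Ā(k−1) = b̄)`. The weight is constant on each cell
`{L̄(K−1) = l̄, Ā(K−1) = b̄}`, so the weighted expectation is the finite sum
`∏ₖ π_k(b̄) · Σ_l̄ ∏ₖ g_k(l̄, b̄)⁻¹ · P(Y^{ā} ∈ B, L̄(K−1) = l̄, Ā(K−1) = b̄)`.
The product of the `π_k` telescopes to `P(Ā(K−1) = b̄)`. In the sum, the factor `g_t⁻¹` is removed
together with the event `A(t) = b(t)` by sequential exchangeability at time `t` (positivity makes
`g_t` invertible), after which summing over the value of `L(t)` removes `L(t)` from the event;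
peeling off `t = K−1, …, 0` leaves `P(Y^{ā} ∈ B)`.
-/

noncomputable section

variable {Ω : Type*} {K : ℕ}

lemma filter_val_lt_succ (t : Fin K) :
    univ.filter (fun k : Fin K => (k : ℕ) < t + 1) =
      insert t (univ.filter (fun k : Fin K => (k : ℕ) < t)) := by
  ext k
  simp only [mem_filter, mem_univ, true_and, mem_insert, Fin.ext_iff]
  omega

lemma filter_val_lt_card : univ.filter (fun k : Fin K => (k : ℕ) < K) = univ :=
  filter_true_of_mem fun k _ => k.isLt

lemma sum_sum_update {ι α M : Type*} [Fintype ι] [DecidableEq ι] [Fintype α]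
    [AddCommMonoid M] (f : (ι → α) → M) (i : ι) :
    ∑ l, ∑ c, f (Function.update l i c) = Fintype.card α • ∑ l, f l := by
  have hinv : Function.Involutive fun p : (ι → α) × α => (Function.update p.1 i p.2, p.1 i) := by
    rintro ⟨l, c⟩
    simp
  calc ∑ l, ∑ c, f (Function.update l i c)
      = ∑ p : (ι → α) × α, f (hinv.toPerm _ p).1 := (Fintype.sum_prod_type' _).symm
    _ = ∑ p : (ι → α) × α, f p.1 := Equiv.sum_comp (hinv.toPerm _) fun p => f p.1
    _ = Fintype.card α • ∑ l, f l := by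
      simp only [Fintype.sum_prod_type, sum_const, card_univ, smul_sum]

section History

variable {α : Type*}

def pastEq (X : Fin K → Ω → α) (t : ℕ) (x : Fin K → α) : Set Ω :=
  {ω | ∀ k : Fin K, (k : ℕ) < t → X k ω = x k}

lemma Apast_eq_pastEq (A : Fin K → Ω → Bool) (t : ℕ) (b : Fin K → Bool) :
    Apast A t b = pastEq A t b := rfl

lemma Lpast_eq_pastEq (X : Fin K → Ω → α) (t : ℕ) (x : Fin K → α) :
    Lpast X t x = pastEq X (t + 1) x := by
  ext ω
  simp only [Lpast, pastEq, Set.mem_ofPred_eq, Nat.lt_succ_iff]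

lemma pastEq_zero (X : Fin K → Ω → α) (x : Fin K → α) : pastEq X 0 x = Set.univ := by
  ext ω
  simp [pastEq]

lemma pastEq_succ (X : Fin K → Ω → α) (t : Fin K) (x : Fin K → α) :
    pastEq X (t + 1) x = {ω | X t ω = x t} ∩ pastEq X t x := by
  ext ω
  simp only [pastEq, Set.mem_ofPred_eq, Set.mem_inter_iff, Nat.lt_succ_iff_lt_or_eq, or_imp,
    forall_and]
  constructor
  · rintro ⟨hlt, heq⟩
    exact ⟨heq t rfl, hlt⟩
  · rintro ⟨ht, hlt⟩
    exact ⟨hlt, fun k hk => Fin.ext hk ▸ ht⟩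

lemma pastEq_congr (X : Fin K → Ω → α) {t : ℕ} {x y : Fin K → α}
    (h : ∀ k : Fin K, (k : ℕ) < t → x k = y k) : pastEq X t x = pastEq X t y := by
  ext ω
  exact forall₂_congr fun k hk => by rw [h k hk]

lemma pastEq_succ_update (X : Fin K → Ω → α) (t : Fin K) (x : Fin K → α) (c : α) :
    pastEq X (t + 1) (Function.update x t c) = {ω | X t ω = c} ∩ pastEq X t x := by
  rw [pastEq_succ, Function.update_self,
    pastEq_congr X fun k hk => Function.update_of_ne (Fin.ne_of_lt hk) c x]

lemma mem_pastEq_card {X : Fin K → Ω → α} {ω : Ω} {x : Fin K → α} :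
    ω ∈ pastEq X K x ↔ (fun k => X k ω) = x := by
  simp [pastEq, funext_iff]

end History

variable [MeasurableSpace Ω]

lemma measurableSet_pastEq [MeasurableSpace α] [MeasurableSingletonClass α]
    {X : Fin K → Ω → α} (hX : ∀ k, Measurable (X k)) (t : ℕ) (x : Fin K → α) :
    MeasurableSet (pastEq X t x) := by
  have : pastEq X t x = ⋂ k : Fin K, ⋂ _ : (k : ℕ) < t, X k ⁻¹' {x k} := by
    ext ω
    simp [pastEq]
  rw [this]
  exact .iInter fun k => .iInter fun _ => hX k (measurableSet_singleton _)

lemma sum_measureReal_inter_preimage_singleton {α : Type*} [Fintype α] [MeasurableSpace α]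
    [MeasurableSingletonClass α] (μ : Measure Ω) [IsFiniteMeasure μ] {f : Ω → α}
    (hf : Measurable f) (s : Set Ω) :
    ∑ c, μ.real (s ∩ f ⁻¹' {c}) = μ.real s := by
  have h := sum_measureReal_preimage_singleton (μ := μ.restrict s) univ
    fun c _ => hf (measurableSet_singleton c)
  simp only [measureReal_restrict_apply (hf (measurableSet_singleton _)), coe_univ,
    Set.preimage_univ, measureReal_restrict_apply_univ] at h
  simpa only [Set.inter_comm s] using h

lemma inv_cP_mul_measureReal_inter (μ : Measure Ω) [IsFiniteMeasure μ] {X Y E : Set Ω}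
    (hindep : 0 < μ E → cP μ (X ∩ Y) E = cP μ X E * cP μ Y E)
    (hpos : 0 < μ E → 0 < cP μ Y E) :
    (cP μ Y E)⁻¹ * μ.real (X ∩ Y ∩ E) = μ.real (X ∩ E) := by
  rcases (zero_le : 0 ≤ μ E).eq_or_lt with hE | hE
  · simp [measureReal_def, measure_mono_null Set.inter_subset_right hE.symm]
  · have hE' : μ.real E ≠ 0 := ENNReal.toReal_ne_zero.mpr ⟨hE.ne', measure_ne_top μ E⟩
    have hcP : ∀ Z, cP μ Z E * μ.real E = μ.real (Z ∩ E) := fun Z => div_mul_cancel₀ _ hE'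
    have hY := (hpos hE).ne'
    rw [← hcP, ← hcP, hindep hE]
    field_simp

variable {𝓛 : Type*}

/-- `π_k(b̄) = P(A(k) = b(k) | Ā(k−1) = b̄)`. -/
def treatProb (P : Measure Ω) (A : Fin K → Ω → Bool) (b : Fin K → Bool) (k : Fin K) : ℝ :=
  cP P {ω | A k ω = b k} (Apast A k b)

/-- `g_k(l̄, b̄) = P(A(k) = b(k) | L̄(k) = l̄, Ā(k−1) = b̄)`. -/
def propensity (P : Measure Ω) (A : Fin K → Ω → Bool) (L : Fin K → Ω → 𝓛) (l : Fin K → 𝓛)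
    (b : Fin K → Bool) (k : Fin K) : ℝ :=
  cP P {ω | A k ω = b k} (Lpast L k l ∩ Apast A k b)

lemma Wsw_apply (P : Measure Ω) (A : Fin K → Ω → Bool) (L : Fin K → Ω → 𝓛) (ω : Ω) :
    Wsw P A L ω = ∏ k, treatProb P A (fun j => A j ω) k /
      propensity P A L (fun j => L j ω) (fun j => A j ω) k := rfl

lemma propensity_update_of_lt (P : Measure Ω) (A : Fin K → Ω → Bool) (L : Fin K → Ω → 𝓛)
    (l : Fin K → 𝓛) (b : Fin K → Bool) {t k : Fin K} (hk : k < t) (c : 𝓛) :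
    propensity P A L (Function.update l t c) b k = propensity P A L l b k := by
  rw [propensity, propensity, Lpast_eq_pastEq, Lpast_eq_pastEq,
    pastEq_congr L fun j hj => Function.update_of_ne (by omega) c l]

lemma prod_treatProb (P : Measure Ω) [IsProbabilityMeasure P] (A : Fin K → Ω → Bool)
    (b : Fin K → Bool) {t : ℕ} (ht : t ≤ K) :
    ∏ k ∈ univ.filter (fun k : Fin K => (k : ℕ) < t), treatProb P A b k =
      P.real (Apast A t b) := by
  induction t with
  | zero => simp [Apast_eq_pastEq, pastEq_zero]
  | succ t ih =>
    have hsucc := filter_val_lt_succ (⟨t, ht⟩ : Fin K)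
    rw [hsucc, prod_insert (by simp), ih (by omega), treatProb, cP, ← measureReal_def,
      ← measureReal_def, div_mul_cancel_of_imp fun h => ?_]
    · exact congrArg P.real (pastEq_succ A ⟨t, ht⟩ b).symm
    rw [measureReal_eq_zero_iff] at h ⊢
    exact measure_mono_null Set.inter_subset_right h

/-- The inverse-propensity-weighted probability of `E` on the cell `L̄(t−1) = l̄, Ā(t−1) = b̄`. -/
def ipwTerm (P : Measure Ω) (A : Fin K → Ω → Bool) (L : Fin K → Ω → 𝓛) (E : Set Ω)
    (b : Fin K → Bool) (t : ℕ) (l : Fin K → 𝓛) : ℝ :=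
  (∏ k ∈ univ.filter (fun k : Fin K => (k : ℕ) < t), (propensity P A L l b k)⁻¹) *
    P.real (E ∩ pastEq L t l ∩ Apast A t b)

/-- Only `l` below `t` matters in `ipwTerm … t l`, so each cell is counted `card 𝓛 ^ (K − t)`
times. -/
def ipwMass [Fintype 𝓛] (P : Measure Ω) (A : Fin K → Ω → Bool) (L : Fin K → Ω → 𝓛)
    (E : Set Ω) (b : Fin K → Bool) (t : ℕ) : ℝ :=
  ∑ l, ipwTerm P A L E b t l

lemma ipwMass_zero [Fintype 𝓛] (P : Measure Ω)
    (A : Fin K → Ω → Bool) (L : Fin K → Ω → 𝓛) (E : Set Ω) (b : Fin K → Bool) :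
    ipwMass P A L E b 0 = (Fintype.card 𝓛 : ℝ) ^ K * P.real E := by
  simp [ipwMass, ipwTerm, Apast_eq_pastEq, pastEq_zero]

section Exchangeability

variable (P : Measure Ω) (A : Fin K → Ω → Bool) (L : Fin K → Ω → 𝓛)
  (Ypot : (Fin K → Bool) → Ω → ℝ) (a b : Fin K → Bool) {B : Set ℝ}

lemma ipwTerm_succ_update [IsFiniteMeasure P] (hA2 : A2ok P A L Ypot) (hA3 : A3ok P A L)
    (hB : MeasurableSet B) (t : Fin K) (l : Fin K → 𝓛) (c : 𝓛) :
    ipwTerm P A L {ω | Ypot a ω ∈ B} b (t + 1) (Function.update l t c) =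
      (∏ k ∈ univ.filter (fun k : Fin K => (k : ℕ) < t), (propensity P A L l b k)⁻¹) *
        P.real ({ω | Ypot a ω ∈ B} ∩ pastEq L t l ∩ Apast A t b ∩ L t ⁻¹' {c}) := by
  set E := {ω | Ypot a ω ∈ B}
  set F := Lpast L t (Function.update l t c) ∩ Apast A t b with hF
  rw [Lpast_eq_pastEq, pastEq_succ_update] at hF
  have hprod : ∏ k ∈ univ.filter (fun k : Fin K => (k : ℕ) < t + 1),
      (propensity P A L (Function.update l t c) b k)⁻¹ =
        (propensity P A L (Function.update l t c) b t)⁻¹ *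
          ∏ k ∈ univ.filter (fun k : Fin K => (k : ℕ) < t), (propensity P A L l b k)⁻¹ := by
    rw [filter_val_lt_succ, prod_insert (by simp)]
    congr 1
    refine prod_congr rfl fun k hk => ?_
    rw [propensity_update_of_lt P A L l b (by simpa using hk)]
  have hcell : E ∩ pastEq L (t + 1) (Function.update l t c) ∩ Apast A (t + 1) b =
      E ∩ {ω | A t ω = b t} ∩ F := by
    rw [hF, pastEq_succ_update, Apast_eq_pastEq, pastEq_succ]
    ext ω
    simp only [Set.mem_inter_iff, Set.mem_ofPred_eq]
    tauto
  have hfiber : E ∩ pastEq L t l ∩ Apast A t b ∩ L t ⁻¹' {c} = E ∩ F := by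
    rw [hF]
    ext ω
    simp only [Set.mem_inter_iff]
    tauto
  rw [ipwTerm, hprod, hcell, hfiber, mul_comm (_)⁻¹, mul_assoc]
  exact congrArg _ (inv_cP_mul_measureReal_inter P (hA2 t a B hB (b t) _ b) (hA3 t (b t) _ b))

variable [Fintype 𝓛] [MeasurableSpace 𝓛] [MeasurableSingletonClass 𝓛]

lemma card_mul_ipwMass_succ [IsFiniteMeasure P] (hL : ∀ k, Measurable (L k))
    (hA2 : A2ok P A L Ypot) (hA3 : A3ok P A L) (hB : MeasurableSet B) (t : Fin K) :
    (Fintype.card 𝓛 : ℝ) * ipwMass P A L {ω | Ypot a ω ∈ B} b (t + 1) =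
      ipwMass P A L {ω | Ypot a ω ∈ B} b t := by
  rw [ipwMass, ← nsmul_eq_mul, ← sum_sum_update _ t]
  refine sum_congr rfl fun l _ => ?_
  simp only [ipwTerm_succ_update P A L Ypot a b hA2 hA3 hB, ← mul_sum]
  rw [sum_measureReal_inter_preimage_singleton P (hL t)]
  rfl

lemma ipwMass_card_eq_measureReal [IsProbabilityMeasure P] (hL : ∀ k, Measurable (L k))
    (hA2 : A2ok P A L Ypot) (hA3 : A3ok P A L) (hB : MeasurableSet B) :
    ipwMass P A L {ω | Ypot a ω ∈ B} b K = P.real {ω | Ypot a ω ∈ B} := by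
  have htelescope : ∀ t ≤ K, (Fintype.card 𝓛 : ℝ) ^ t * ipwMass P A L {ω | Ypot a ω ∈ B} b t =
      ipwMass P A L {ω | Ypot a ω ∈ B} b 0 := by
    intro t ht
    induction t with
    | zero => simp
    | succ t ih =>
      rw [pow_succ, mul_assoc,
        card_mul_ipwMass_succ P A L Ypot a b hL hA2 hA3 hB ⟨t, ht⟩, ih (by omega)]
  obtain ⟨ω⟩ := nonempty_of_isProbabilityMeasure P
  have : Nonempty (Fin K → 𝓛) := ⟨fun k => L k ω⟩
  have hcard : (Fintype.card 𝓛 : ℝ) ^ K ≠ 0 := by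
    have := Fintype.card_ne_zero (α := Fin K → 𝓛)
    rw [Fintype.card_fun, Fintype.card_fin] at this
    exact_mod_cast this
  rw [← mul_right_inj' hcard, htelescope K le_rfl, ipwMass_zero]

end Exchangeability

lemma integral_Wsw_mul_indicator [Fintype 𝓛] [MeasurableSpace 𝓛] [MeasurableSingletonClass 𝓛]
    (P : Measure Ω) [IsFiniteMeasure P] (A : Fin K → Ω → Bool) (L : Fin K → Ω → 𝓛)
    (hA : ∀ k, Measurable (A k)) (hL : ∀ k, Measurable (L k)) {E : Set Ω} (hE : MeasurableSet E)
    (b : Fin K → Bool) :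
    ∫ ω, Wsw P A L ω * (if ω ∈ E then (1 : ℝ) else 0) *
        (if ω ∈ Apast A K b then (1 : ℝ) else 0) ∂P =
      (∏ k, treatProb P A b k) * ipwMass P A L E b K := by
  set C : (Fin K → 𝓛) → ℝ := fun l => ∏ k, treatProb P A b k / propensity P A L l b k
  have hcell : ∀ l, MeasurableSet (E ∩ pastEq L K l ∩ Apast A K b) := fun l =>
    (hE.inter (measurableSet_pastEq hL _ _)).inter (measurableSet_pastEq hA _ _)
  have hsimple : ∀ ω, Wsw P A L ω * (if ω ∈ E then (1 : ℝ) else 0) *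
      (if ω ∈ Apast A K b then (1 : ℝ) else 0) =
        ∑ l, (E ∩ pastEq L K l ∩ Apast A K b).indicator (fun _ => C l) ω := by
    intro ω
    by_cases hω : ω ∈ E ∩ Apast A K b
    · obtain ⟨hωE, hωA⟩ := hω
      rw [if_pos hωE, if_pos hωA, mul_one, mul_one,
        sum_eq_single_of_mem (fun k => L k ω) (mem_univ _),
        Set.indicator_of_mem (s := E ∩ pastEq L K (fun k => L k ω) ∩ Apast A K b)
          ⟨⟨hωE, mem_pastEq_card.mpr rfl⟩, hωA⟩, Wsw_apply,
        mem_pastEq_card.mp hωA]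
      exact fun l _ hl => Set.indicator_of_notMem (fun h => hl (mem_pastEq_card.mp h.1.2).symm) _
    · rw [sum_eq_zero fun l _ => Set.indicator_of_notMem (fun h => hω ⟨h.1.1, h.2⟩) _]
      rcases not_and_or.mp hω with h | h <;> simp [h]
  rw [integral_congr_ae (.of_forall hsimple), integral_finsetSum _
      fun l _ => (integrable_const (C l)).indicator (hcell l), ipwMass, mul_sum]
  refine sum_congr rfl fun l _ => ?_
  rw [integral_indicator_const _ (hcell l), smul_eq_mul, ipwTerm, filter_val_lt_card]
  simp only [C, prod_div_distrib]
  rw [div_eq_mul_inv, prod_inv_distrib]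
  ring

end

theorem sw_pseudopopulation_factorization_general
    {Ω : Type*} [MeasurableSpace Ω] {𝓛 : Type*} [MeasurableSpace 𝓛]
    [Fintype 𝓛] [MeasurableSingletonClass 𝓛]
    (P : Measure Ω) [IsProbabilityMeasure P]
    {K : ℕ}
    (A : Fin K → Ω → Bool) (L : Fin K → Ω → 𝓛)
    (hA : ∀ k, Measurable (A k)) (hL : ∀ k, Measurable (L k))
    (Ypot : (Fin K → Bool) → Ω → ℝ)
    (hYpm : ∀ a, Measurable (Ypot a))
    (hA2 : A2ok P A L Ypot) (hA3 : A3ok P A L) :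
    ∀ (a b : Fin K → Bool) (B : Set ℝ), MeasurableSet B →
      (∫ ω, Wsw P A L ω * (if Ypot a ω ∈ B then (1 : ℝ) else 0) *
          (if ω ∈ Apast A K b then (1 : ℝ) else 0) ∂P) =
        (P {ω | Ypot a ω ∈ B}).toReal * (P (Apast A K b)).toReal := by
  intro a b B hB
  refine (integral_Wsw_mul_indicator P A L hA hL (E := {ω | Ypot a ω ∈ B}) (hYpm a hB) b).trans ?_
  rw [ipwMass_card_eq_measureReal P A L Ypot a b hL hA2 hA3 hB, ← filter_val_lt_card,
    prod_treatProb P A b le_rfl, mul_comm]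
  rfl

/-- Pseudo-population factorization for stabilized weights (equation (B.2.1)):
under (A2) and (A3), weighting by `W_sw` makes `Y^{ā}` and `Ā(K−1)` independent,
each with its original marginal distribution. -/
theorem sw_pseudopopulation_factorization
    {Ω : Type*} [MeasurableSpace Ω] {𝓛 : Type*} [MeasurableSpace 𝓛]
    [Fintype 𝓛] [Nonempty 𝓛] [MeasurableSingletonClass 𝓛]
    (P : Measure Ω) [IsProbabilityMeasure P]
    {K : ℕ} (hK : 1 ≤ K)
    (A : Fin K → Ω → Bool) (L : Fin K → Ω → 𝓛)
    (hA : ∀ k, Measurable (A k)) (hL : ∀ k, Measurable (L k))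
    (Ypot : (Fin K → Bool) → Ω → ℝ)
    (hYpm : ∀ a, Measurable (Ypot a)) (hYpi : ∀ a, Integrable (Ypot a) P)
    (hA2 : A2ok P A L Ypot) (hA3 : A3ok P A L) :
    ∀ (a b : Fin K → Bool) (B : Set ℝ), MeasurableSet B →
      (∫ ω, Wsw P A L ω * (if Ypot a ω ∈ B then (1 : ℝ) else 0) *
          (if ω ∈ Apast A K b then (1 : ℝ) else 0) ∂P) =
        (P {ω | Ypot a ω ∈ B}).toReal * (P (Apast A K b)).toReal :=
  sw_pseudopopulation_factorization_general P A L hA hL Ypot hYpm hA2 hA3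

end MSMPaper
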